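/- Let G be a k-connected, triangle-free graph with δ(G) ≥ k + 1. Then either V(G) is a (k+1)-block, or G has at least two distinct (k+1)-blocks, each of size at least 2δ(G). -/

import Mathlib

/-!
Call a proper separation of order at most `k` small, and let `C` be an inclusion-minimal side of a
small separation `(C, D)`. Triangle-freeness and `δ > k` make every side large: a vertex `x` of
`C \ D` has a neighbour `y` in `C \ D`, and the disjoint neighbourhoods of `x` and `y` lie in `C`,
so `|C| ≥ 2δ` and `|C \ D| > k`. If some `S` with `|S| ≤ k` separated two vertices of `C`, giving a
separation `(A, B)`, then none of `C \ D`, `D \ C`, `A \ B`, `B \ A` fits into a separator, which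
forces two diagonally opposite quadrants, say `(C \ D) ∩ (A \ B)` and `(D \ C) ∩ (B \ A)`, to be
nonempty. The opposite corner `(D ∩ B, C ∪ A)` is then proper, so has order at least `k` by
`k`-connectivity; by submodularity the corner `(C ∩ A, D ∪ B)` is small, contradicting minimality.
So `C` is a block. If `V` is not a block, a minimal side `C₁` of some `(C₁, D₁)` and a minimal side
`C₂ ⊆ D₁` are two different blocks.
-/

variable {V : Type*}

/-- `S` separates `u` from `v` in `G`: neither lies in `S` and every walk meets `S`. -/
def SepBy (G : SimpleGraph V) (S : Set V) (u v : V) : Prop :=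
  u ∉ S ∧ v ∉ S ∧ ∀ p : G.Walk u v, ∃ w ∈ p.support, w ∈ S

/-- `X` is (≤k)-inseparable: no set of at most `k` vertices separates two of its vertices. -/
def Insep (G : SimpleGraph V) (k : ℕ) (X : Set V) : Prop :=
  ∀ S : Finset V, S.card ≤ k → ∀ u ∈ X, ∀ v ∈ X, ¬ SepBy G (S : Set V) u v

/-- A `k`-block: a maximal (≤(k-1))-inseparable set of at least `k` vertices. -/
def IsBlockN (G : SimpleGraph V) (k : ℕ) (B : Set V) : Prop :=
  k ≤ B.ncard ∧ Insep G (k - 1) B ∧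
    ∀ B' : Set V, B ⊆ B' → Insep G (k - 1) B' → B' = B

/-- `(A,B)` is a separation of `G`. -/
def IsSepn (G : SimpleGraph V) (A B : Set V) : Prop :=
  A ∪ B = Set.univ ∧ ∀ a ∈ A \ B, ∀ b ∈ B \ A, ¬ G.Adj a b

/-- A separation is proper if neither side contains the other. -/
def ProperSep (A B : Set V) : Prop := ¬ A ⊆ B ∧ ¬ B ⊆ A

/-- `G` is `k`-connected. -/
def KConn (G : SimpleGraph V) [Fintype V] (k : ℕ) : Prop :=
  k < Fintype.card V ∧ ∀ S : Finset V, S.card < k → ∀ u v : V, ¬ SepBy G (S : Set V) u v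

open Set SimpleGraph

def IsSmallSep (G : SimpleGraph V) (k : ℕ) (A B : Set V) : Prop :=
  IsSepn G A B ∧ ProperSep A B ∧ (A ∩ B).ncard ≤ k

section Separations

variable {G : SimpleGraph V} {A B A' B' : Set V}

lemma IsSepn.symm (h : IsSepn G A B) : IsSepn G B A :=
  ⟨union_comm A B ▸ h.1, fun b hb a ha hab => h.2 a ha b hb hab.symm⟩

lemma IsSepn.mem_right_of_notMem_left (h : IsSepn G A B) {x : V} (hx : x ∉ A) : x ∈ B :=
  (h.1 ▸ mem_univ x : x ∈ A ∪ B).resolve_left hx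

lemma IsSepn.sepBy (h : IsSepn G A B) {a b : V} (ha : a ∈ A \ B) (hb : b ∈ B \ A) :
    SepBy G (A ∩ B) a b := by
  refine ⟨fun h' => ha.2 h'.2, fun h' => hb.2 h'.1, fun p => ?_⟩
  obtain ⟨d, hd, hfst, hsnd⟩ := p.exists_boundary_dart (A \ B) ha fun h' => hb.2 h'.1
  refine ⟨d.snd, p.dart_snd_mem_support_of_mem_darts hd, ?_⟩
  have hA : d.snd ∈ A := by_contra fun hA =>
    h.2 _ hfst _ ⟨h.mem_right_of_notMem_left hA, hA⟩ d.adj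
  exact ⟨hA, by_contra fun hB => hsnd ⟨hA, hB⟩⟩

lemma IsSepn.exists_finset_sepBy [Finite V] (h : IsSepn G A B) {a b : V} (ha : a ∈ A \ B)
    (hb : b ∈ B \ A) : ∃ S : Finset V, S.card = (A ∩ B).ncard ∧ SepBy G S a b :=
  ⟨(toFinite (A ∩ B)).toFinset, (ncard_eq_toFinset_card _ _).symm, by
    simpa using h.sepBy ha hb⟩

lemma SepBy.exists_isSepn {S : Set V} {u v : V} (h : SepBy G S u v) :
    ∃ A B : Set V, IsSepn G A B ∧ u ∈ A \ B ∧ v ∈ B \ A ∧ A ∩ B ⊆ S := by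
  set R : Set V := {x | ∃ p : G.Walk u x, ∀ w ∈ p.support, w ∉ S}
  have huR : u ∈ R := ⟨.nil, by simpa using h.1⟩
  have hvR : v ∉ R := fun ⟨p, hp⟩ =>
    let ⟨w, hw, hwS⟩ := h.2.2 p
    hp w hw hwS
  have hR_closed : ∀ {x z : V}, x ∈ R → G.Adj x z → z ∉ S → z ∈ R := by
    rintro x z ⟨p, hp⟩ hxz hz
    refine ⟨p.concat hxz, fun w hw => ?_⟩
    rw [Walk.support_concat, List.mem_append, List.mem_singleton] at hw
    exact hw.elim (hp w) fun hwz => hwz ▸ hz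
  refine ⟨R ∪ S, Rᶜ, ⟨?_, ?_⟩, ⟨.inl huR, not_not.2 huR⟩, ⟨hvR, fun hv => hv.elim hvR h.2.1⟩, ?_⟩
  · exact eq_univ_of_forall fun x => (em (x ∈ R)).elim (.inl ∘ .inl) .inr
  · rintro a ⟨-, haR⟩ b ⟨hbR, hbA⟩ hab
    exact hbR (hR_closed (not_not.1 haR) hab fun hbS => hbA (.inr hbS))
  · rintro x ⟨hx, hxR⟩
    exact hx.resolve_left hxR

lemma IsSepn.inter_union (h : IsSepn G A B) (h' : IsSepn G A' B') :
    IsSepn G (A ∩ A') (B ∪ B') := by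
  refine ⟨eq_univ_of_forall fun x => ?_, ?_⟩
  · by_cases hA : x ∈ A
    · by_cases hA' : x ∈ A'
      · exact .inl ⟨hA, hA'⟩
      · exact .inr (.inr (h'.mem_right_of_notMem_left hA'))
    · exact .inr (.inl (h.mem_right_of_notMem_left hA))
  · rintro a ⟨⟨haA, haA'⟩, haBB'⟩ b ⟨-, hb⟩ hab
    simp only [mem_union, not_or] at haBB'
    by_cases hbA : b ∈ A
    · have hbA' : b ∉ A' := fun hbA' => hb ⟨hbA, hbA'⟩
      exact h'.2 a ⟨haA', haBB'.2⟩ b ⟨h'.mem_right_of_notMem_left hbA', hbA'⟩ hab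
    · exact h.2 a ⟨haA, haBB'.1⟩ b ⟨h.mem_right_of_notMem_left hbA, hbA⟩ hab

lemma IsSmallSep.symm {k : ℕ} (h : IsSmallSep G k A B) : IsSmallSep G k B A :=
  ⟨h.1.symm, h.2.1.symm, inter_comm A B ▸ h.2.2⟩

lemma exists_isSmallSep_of_not_insep {k : ℕ} {X : Set V} (hX : ¬ Insep G k X) :
    ∃ A B : Set V, IsSmallSep G k A B := by
  simp only [Insep, not_forall, not_not] at hX
  obtain ⟨S, hS, u, -, v, -, huv⟩ := hX
  obtain ⟨A, B, hAB, hu, hv, hABS⟩ := huv.exists_isSepn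
  exact ⟨A, B, hAB, ⟨not_subset.2 ⟨u, hu⟩, not_subset.2 ⟨v, hv⟩⟩,
    (ncard_le_ncard hABS).trans (by simpa using hS)⟩

end Separations

-- Submodularity of the order of separations.
lemma ncard_inter_inter_union_add_ncard_union_inter_inter_le [Finite V] (A B A' B' : Set V) :
    ((A ∩ A') ∩ (B ∪ B')).ncard + ((A ∪ A') ∩ (B ∩ B')).ncard ≤
      (A ∩ B).ncard + (A' ∩ B').ncard := by
  set X := (A ∩ A') ∩ (B ∪ B')
  set Y := (A ∪ A') ∩ (B ∩ B')
  have hunion : X ∪ Y ⊆ (A ∩ B) ∪ (A' ∩ B') := by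
    intro x; simp only [X, Y, mem_union, mem_inter_iff]; tauto
  have hinter : X ∩ Y ⊆ (A ∩ B) ∩ (A' ∩ B') := by
    intro x; simp only [X, Y, mem_union, mem_inter_iff]; tauto
  calc X.ncard + Y.ncard = (X ∪ Y).ncard + (X ∩ Y).ncard := (ncard_union_add_ncard_inter X Y).symm
    _ ≤ ((A ∩ B) ∪ (A' ∩ B')).ncard + ((A ∩ B) ∩ (A' ∩ B')).ncard :=
      add_le_add (ncard_le_ncard hunion) (ncard_le_ncard hinter)
    _ = (A ∩ B).ncard + (A' ∩ B').ncard := ncard_union_add_ncard_inter _ _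

lemma inter_sdiff_nonempty_or_of_ncard_lt [Finite V] {A B X : Set V} (hAB : A ∪ B = univ)
    (hX : (A ∩ B).ncard < X.ncard) : (X ∩ (A \ B)).Nonempty ∨ (X ∩ (B \ A)).Nonempty := by
  obtain ⟨x, hxX, hxAB⟩ := exists_mem_notMem_of_ncard_lt_ncard hX
  by_cases hA : x ∈ A
  · exact .inl ⟨x, hxX, hA, fun hB => hxAB ⟨hA, hB⟩⟩
  · exact .inr ⟨x, hxX, (hAB ▸ mem_univ x : x ∈ A ∪ B).resolve_left hA, hA⟩

section Connectivity

variable [Fintype V] {G : SimpleGraph V} {k : ℕ} {A B C D : Set V}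

lemma KConn.le_ncard_inter (hconn : KConn G k) (h : IsSepn G A B) (hprop : ProperSep A B) :
    k ≤ (A ∩ B).ncard := by
  obtain ⟨a, ha⟩ := not_subset.1 hprop.1
  obtain ⟨b, hb⟩ := not_subset.1 hprop.2
  obtain ⟨S, hS, hab⟩ := h.exists_finset_sepBy ha hb
  exact not_lt.1 fun hlt => hconn.2 S (hS ▸ hlt) a b hab

lemma IsSepn.two_mul_minDegree_le_ncard [DecidableRel G.Adj] (htri : G.CliqueFree 3)
    (h : IsSepn G A B) (hord : (A ∩ B).ncard < G.minDegree) (hne : (A \ B).Nonempty) :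
    2 * G.minDegree ≤ A.ncard := by
  classical
  obtain ⟨x, hx⟩ := hne
  have hnbhd : ∀ {y : V}, y ∈ A \ B → (G.neighborFinset y : Set V) ⊆ A := fun hy z hz =>
    by_contra fun hzA =>
      h.2 _ hy z ⟨h.mem_right_of_notMem_left hzA, hzA⟩ ((mem_neighborFinset _ _ _).1 hz)
  obtain ⟨y, hxy, hyAB⟩ : ∃ y ∈ (G.neighborFinset x : Set V), y ∉ A ∩ B := by
    refine exists_mem_notMem_of_ncard_lt_ncard (hord.trans_le ?_)
    rw [ncard_coe_finset, card_neighborFinset_eq_degree]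
    exact G.minDegree_le_degree x
  have hy : y ∈ A \ B := ⟨hnbhd hx hxy, fun hyB => hyAB ⟨hnbhd hx hxy, hyB⟩⟩
  rw [Finset.mem_coe, mem_neighborFinset] at hxy
  have hdisj : Disjoint (G.neighborFinset x) (G.neighborFinset y) :=
    Finset.disjoint_left.2 fun z hzx hzy => htri {x, y, z}
      (is3Clique_triple_iff.2 ⟨hxy, (mem_neighborFinset _ _ _).1 hzx,
        (mem_neighborFinset _ _ _).1 hzy⟩)
  have hsub : ((G.neighborFinset x ∪ G.neighborFinset y : Finset V) : Set V) ⊆ A := by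
    rw [Finset.coe_union]
    exact union_subset (hnbhd hx) (hnbhd hy)
  calc 2 * G.minDegree ≤ G.degree x + G.degree y := by
        linarith [G.minDegree_le_degree x, G.minDegree_le_degree y]
    _ = (G.neighborFinset x ∪ G.neighborFinset y).card := by
        rw [Finset.card_union_of_disjoint hdisj, card_neighborFinset_eq_degree,
          card_neighborFinset_eq_degree]
    _ ≤ A.ncard := by rw [← ncard_coe_finset]; exact ncard_le_ncard hsub

lemma IsSepn.minDegree_lt_ncard_sdiff [DecidableRel G.Adj] (htri : G.CliqueFree 3)
    (h : IsSepn G A B) (hord : (A ∩ B).ncard < G.minDegree) (hne : (A \ B).Nonempty) :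
    G.minDegree < (A \ B).ncard := by
  have := h.two_mul_minDegree_le_ncard htri hord hne
  have := ncard_inter_add_ncard_sdiff_eq_ncard A B
  omega

lemma IsSmallSep.inter_union_of_nonempty (hconn : KConn G k) (hCD : IsSmallSep G k C D)
    (hAB : IsSepn G A B) (hord : (A ∩ B).ncard ≤ k) (hCA : ((C \ D) ∩ (A \ B)).Nonempty)
    (hDB : ((D \ C) ∩ (B \ A)).Nonempty) : IsSmallSep G k (C ∩ A) (D ∪ B) := by
  obtain ⟨x, ⟨hxC, hxD⟩, hxA, hxB⟩ := hCA
  obtain ⟨y, ⟨hyD, hyC⟩, hyB, hyA⟩ := hDB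
  have hopp : k ≤ ((D ∩ B) ∩ (C ∪ A)).ncard :=
    hconn.le_ncard_inter (hCD.1.symm.inter_union hAB.symm)
      ⟨fun hsub => (hsub ⟨hyD, hyB⟩).elim hyC hyA, fun hsub => hxD (hsub (.inl hxC)).1⟩
  have hsubmod := ncard_inter_inter_union_add_ncard_union_inter_inter_le C D A B
  rw [inter_comm (D ∩ B)] at hopp
  refine ⟨hCD.1.inter_union hAB, ⟨fun hsub => (hsub ⟨hxC, hxA⟩).elim hxD hxB,
    fun hsub => hyC (hsub (.inl hyD)).1⟩, by linarith [hCD.2.2]⟩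

variable [DecidableRel G.Adj]

lemma insep_of_minimal (hconn : KConn G k) (htri : G.CliqueFree 3) (hδ : k < G.minDegree)
    (hC : Minimal (fun X => ∃ Y, IsSmallSep G k X Y) C) : Insep G k C := by
  obtain ⟨D, hCD⟩ := hC.prop
  intro S hS u hu v hv huv
  obtain ⟨A, B, hAB, huA, hvB, hABS⟩ := huv.exists_isSepn
  have hord : (A ∩ B).ncard ≤ k := (ncard_le_ncard hABS).trans (by simpa using hS)
  have hlarge : ∀ {X Y : Set V}, IsSepn G X Y → (X ∩ Y).ncard ≤ k → (X \ Y).Nonempty →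
      k < (X \ Y).ncard := fun hXY hord hne =>
    hδ.trans (hXY.minDegree_lt_ncard_sdiff htri (hord.trans_lt hδ) hne)
  have hCDne : (C \ D).Nonempty := nonempty_of_not_subset hCD.2.1.1
  have hDCne : (D \ C).Nonempty := nonempty_of_not_subset hCD.2.1.2
  have hC' := inter_sdiff_nonempty_or_of_ncard_lt hAB.1
    (hord.trans_lt (hlarge hCD.1 hCD.2.2 hCDne))
  have hD' := inter_sdiff_nonempty_or_of_ncard_lt hAB.1
    (hord.trans_lt (hlarge hCD.1.symm (inter_comm C D ▸ hCD.2.2) hDCne))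
  have hA' := inter_sdiff_nonempty_or_of_ncard_lt hCD.1.1
    (hCD.2.2.trans_lt (hlarge hAB hord ⟨u, huA⟩))
  have hB' := inter_sdiff_nonempty_or_of_ncard_lt hCD.1.1
    (hCD.2.2.trans_lt (hlarge hAB.symm (inter_comm A B ▸ hord) ⟨v, hvB⟩))
  rw [inter_comm (A \ B), inter_comm (A \ B)] at hA'
  rw [inter_comm (B \ A), inter_comm (B \ A)] at hB'
  have hdiag₁ : ¬ (((C \ D) ∩ (A \ B)).Nonempty ∧ ((D \ C) ∩ (B \ A)).Nonempty) :=
    fun ⟨h, h'⟩ => hvB.2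
      (hC.le_of_le ⟨_, hCD.inter_union_of_nonempty hconn hAB hord h h'⟩ inter_subset_left hv).2
  have hdiag₂ : ¬ (((C \ D) ∩ (B \ A)).Nonempty ∧ ((D \ C) ∩ (A \ B)).Nonempty) :=
    fun ⟨h, h'⟩ => huA.2 (hC.le_of_le ⟨_, hCD.inter_union_of_nonempty hconn hAB.symm
      (inter_comm A B ▸ hord) h h'⟩ inter_subset_left hu).2
  tauto

lemma isBlockN_of_minimal (hconn : KConn G k) (htri : G.CliqueFree 3) (hδ : k < G.minDegree)
    (hC : Minimal (fun X => ∃ Y, IsSmallSep G k X Y) C) :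
    IsBlockN G (k + 1) C ∧ 2 * G.minDegree ≤ C.ncard := by
  obtain ⟨D, hCD⟩ := hC.prop
  obtain ⟨y, hy⟩ := nonempty_of_not_subset hCD.2.1.1
  have hsize := hCD.1.two_mul_minDegree_le_ncard htri (hCD.2.2.trans_lt hδ) ⟨y, hy⟩
  refine ⟨⟨by omega, by simpa using insep_of_minimal hconn htri hδ hC, fun B' hCB' hB' => ?_⟩,
    hsize⟩
  refine (hCB'.antisymm fun x hxB' => by_contra fun hxC => ?_).symm
  obtain ⟨S, hS, hyx⟩ :=
    hCD.1.exists_finset_sepBy hy ⟨hCD.1.mem_right_of_notMem_left hxC, hxC⟩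
  exact hB' S (by simpa [hS] using hCD.2.2) y (hCB' hy.1) x hxB' hyx

end Connectivity

theorem stmt6_general [Fintype V] (G : SimpleGraph V) [DecidableRel G.Adj]
    (k : ℕ) (hconn : KConn G k) (htri : G.CliqueFree 3)
    (hδ : k + 1 ≤ G.minDegree) :
    IsBlockN G (k + 1) Set.univ ∨
      ∃ B₁ B₂ : Set V, B₁ ≠ B₂ ∧ IsBlockN G (k + 1) B₁ ∧ IsBlockN G (k + 1) B₂ ∧
        2 * G.minDegree ≤ B₁.ncard ∧ 2 * G.minDegree ≤ B₂.ncard := by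
  by_cases hV : Insep G k univ
  · left
    exact ⟨by simpa using hconn.1, by simpa using hV, fun B' h _ => univ_subset_iff.1 h⟩
  right
  obtain ⟨C₁, hC₁⟩ := exists_minimal_of_wellFoundedLT _ (exists_isSmallSep_of_not_insep hV)
  obtain ⟨D₁, hCD₁⟩ := hC₁.prop
  obtain ⟨C₂, hC₂D₁, hC₂⟩ :=
    exists_minimal_le_of_wellFoundedLT (fun X => ∃ Y, IsSmallSep G k X Y) D₁ ⟨C₁, hCD₁.symm⟩
  obtain ⟨hB₁, hB₁size⟩ := isBlockN_of_minimal hconn htri hδ hC₁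
  obtain ⟨hB₂, hB₂size⟩ := isBlockN_of_minimal hconn htri hδ hC₂
  exact ⟨C₁, C₂, fun h => hCD₁.2.1.1 (h ▸ hC₂D₁), hB₁, hB₂, hB₁size, hB₂size⟩

theorem stmt6 [Fintype V] [Nonempty V] (G : SimpleGraph V) [DecidableRel G.Adj]
    (k : ℕ) (hconn : KConn G k) (htri : G.CliqueFree 3)
    (hδ : k + 1 ≤ G.minDegree) :
    IsBlockN G (k + 1) Set.univ ∨
      ∃ B₁ B₂ : Set V, B₁ ≠ B₂ ∧ IsBlockN G (k + 1) B₁ ∧ IsBlockN G (k + 1) B₂ ∧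
        2 * G.minDegree ≤ B₁.ncard ∧ 2 * G.minDegree ≤ B₂.ncard :=
  stmt6_general G k hconn htri hδ
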